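/- arXiv:0910.2941 — 3 statements merged into one kernel-verified Lean document; each statement's English description precedes it below -/
import Mathlib

section
/- For all natural numbers a, b, c with a + b + c = n, the multinomial coefficient n!/(a!·b!·c!) is at most n!/(⌊(n+2)/3⌋! · ⌊(n+1)/3⌋! · ⌊n/3⌋!). -/
/-!
Induction on `n`. Removing one unit from the largest part `x` of a split of `n + 1` divides
`a! b! c!` by `x ≥ ⌊n/3⌋ + 1`, while passing from the balanced split of `n` to that of `n + 1`
only raises the smallest part `⌊n/3⌋` by one, i.e. multiplies by `⌊n/3⌋ + 1`.
-/

open Nat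

def balancedFactorialProd (n : ℕ) : ℕ :=
  ((n + 2) / 3)! * ((n + 1) / 3)! * (n / 3)!

lemma balancedFactorialProd_succ (n : ℕ) :
    balancedFactorialProd (n + 1) = (n / 3 + 1) * balancedFactorialProd n := by
  have h₁ : (n + 1 + 2) / 3 = n / 3 + 1 := by omega
  have h₂ : (n + 1 + 1) / 3 = (n + 2) / 3 := by omega
  rw [balancedFactorialProd, balancedFactorialProd, h₁, h₂, factorial_succ]
  ring

lemma balancedFactorialProd_succ_le_of_le_max {n x y z : ℕ} (hsum : x + y + z = n + 1)
    (hy : y ≤ x) (hz : z ≤ x) (ih : balancedFactorialProd n ≤ (x - 1)! * y ! * z !) :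
    balancedFactorialProd (n + 1) ≤ x ! * y ! * z ! := by
  obtain ⟨k, rfl⟩ : ∃ k, x = k + 1 := ⟨x - 1, by omega⟩
  have hk : n / 3 + 1 ≤ k + 1 := by omega
  calc balancedFactorialProd (n + 1) = (n / 3 + 1) * balancedFactorialProd n :=
        balancedFactorialProd_succ n
    _ ≤ (k + 1) * (k ! * y ! * z !) := Nat.mul_le_mul hk ih
    _ = (k + 1)! * y ! * z ! := by rw [factorial_succ]; ring

theorem balancedFactorialProd_le :
    ∀ {n a b c : ℕ}, a + b + c = n → balancedFactorialProd n ≤ a ! * b ! * c !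
  | 0, a, b, c, h => by
    obtain ⟨rfl, rfl, rfl⟩ : a = 0 ∧ b = 0 ∧ c = 0 := by omega
    rfl
  | n + 1, a, b, c, h => by
    by_cases ha : b ≤ a ∧ c ≤ a
    · exact balancedFactorialProd_succ_le_of_le_max h ha.1 ha.2
        (balancedFactorialProd_le (by omega))
    by_cases hb : a ≤ b ∧ c ≤ b
    · refine (balancedFactorialProd_succ_le_of_le_max (x := b) (y := a) (z := c) (by omega)
        hb.1 hb.2 (balancedFactorialProd_le (by omega))).trans_eq ?_
      ring
    · refine (balancedFactorialProd_succ_le_of_le_max (x := c) (y := a) (z := b) (by omega)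
        (by omega) (by omega) (balancedFactorialProd_le (by omega))).trans_eq ?_
      ring

/-- For `a + b + c = n`, the multinomial coefficient `n!/(a!·b!·c!)` is at most
`n!/(⌊(n+2)/3⌋!·⌊(n+1)/3⌋!·⌊n/3⌋!)`. -/
theorem multinomial_le_balanced (n a b c : ℕ) (h : a + b + c = n) :
    n.factorial / (a.factorial * b.factorial * c.factorial) ≤
      n.factorial /
        (((n + 2) / 3).factorial * ((n + 1) / 3).factorial * (n / 3).factorial) :=
  Nat.div_le_div_left (balancedFactorialProd_le h) (by positivity)
end

section
/- Let H be a 3-partite 3-graph with 3-partition U₁, U₂, U₃ satisfying: (i) for every pair of vertices u ∈ U_i, v ∈ U_j (i ≠ j) contained in some edge, the link L(u,v) = {w ∈ U_ℓ : {u,v,w} ∈ H} has size > n/10 (where {i,j,ℓ} = {1,2,3}); and (ii) for every {i,j,ℓ} = {1,2,3}, all A_i ⊆ U_i, A_j ⊆ U_j with |A_i|, |A_j| > n/10, and every v ∈ U_ℓ, the number of edges of H containing v and intersecting both A_i and A_j is at least |A_i||A_j|/10. Suppose further that every pair of vertices lies in some edge's link structure as needed, i.e., condition (i) holds for all u,v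 in distinct parts. Then the 3-partition of H is unique: any partition V₁, V₂, V₃ of the vertex set into three parts such that every edge of H has exactly one vertex in each part equals {U₁, U₂, U₃} as an unordered partition. -/
/-! Condition (i) puts any two vertices from different parts `U_i ≠ U_j` into a common edge,
so any other 3-partition must also separate them. Choosing one representative of each `U_i`
therefore yields three distinct `g`-parts, i.e. a permutation `σ`; and a vertex `v` whose
`g`-part is `σ k` must lie in `U_k`, since otherwise `v` and the representative of `U_k` would
be separated by `g`. -/

open Finset Function

theorem Set.injOn_of_card_filter_le_one {α β : Type*} [DecidableEq β] {e : Finset α}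
    {g : α → β} (he : ∀ i, (e.filter fun v => g v = i).card ≤ 1) : Set.InjOn g e :=
  fun u hu v hv huv =>
    card_le_one.mp (he (g u)) u (mem_filter.mpr ⟨hu, rfl⟩) v (mem_filter.mpr ⟨hv, huv.symm⟩)

theorem exists_perm_eq_comp_of_ne_imp_ne {V α : Type*} [Finite α] {f g : V → α}
    (hf : Surjective f) (h : ∀ u v, f u ≠ f v → g u ≠ g v) :
    ∃ σ : Equiv.Perm α, ∀ v, g v = σ (f v) := by
  set rep := surjInv hf
  have hinj : Injective (g ∘ rep) := fun i j hij => by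
    by_contra hne
    exact h (rep i) (rep j) (by simpa only [rep, surjInv_eq hf]) hij
  let σ := Equiv.ofBijective _ (Finite.injective_iff_bijective.mp hinj)
  refine ⟨σ, fun v => ?_⟩
  obtain ⟨k, hk⟩ := σ.surjective (g v)
  obtain rfl : k = f v := by
    by_contra hne
    exact h (rep k) v (by rwa [surjInv_eq hf]) hk
  exact hk.symm

theorem tripartition_unique_general {V : Type*} [Fintype V] [DecidableEq V]
    (H : Finset (Finset V))
    (n : ℕ)
    (f : V → Fin 3) (hfsurj : Function.Surjective f)
    (hlink : ∀ u v : V, f u ≠ f v →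
      ∀ ℓ : Fin 3, ℓ ≠ f u → ℓ ≠ f v →
        ((Finset.univ.filter (fun w : V =>
            f w = ℓ ∧ ({u, v, w} : Finset V) ∈ H)).card : ℝ) > n / 10)
    (g : V → Fin 3)
    (hg : ∀ e ∈ H, ∀ i : Fin 3, (e.filter (fun v => g v = i)).card = 1) :
    ∃ σ : Equiv.Perm (Fin 3), ∀ v : V, g v = σ (f v) := by
  refine exists_perm_eq_comp_of_ne_imp_ne hfsurj fun u v huv hguv => huv ?_
  obtain ⟨ℓ, hℓu, hℓv⟩ : ∃ ℓ : Fin 3, ℓ ≠ f u ∧ ℓ ≠ f v := by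
    revert huv; generalize f u = a; generalize f v = b; revert a b; decide
  obtain ⟨w, hw⟩ : (univ.filter fun w : V => f w = ℓ ∧ ({u, v, w} : Finset V) ∈ H).Nonempty := by
    rw [← card_pos, ← Nat.cast_pos (α := ℝ)]
    exact (by positivity : (0 : ℝ) ≤ n / 10).trans_lt (hlink u v huv ℓ hℓu hℓv)
  have hedge := (mem_filter.mp hw).2.2
  exact congrArg f <| Set.injOn_of_card_filter_le_one (fun i => (hg _ hedge i).le)
    (by simp) (by simp) hguv

/-- Uniqueness of the 3-partition: if a 3-partite 3-graph `H` on `n` vertices,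
with 3-partition given by a surjective `f : V → Fin 3`, satisfies
(i) every pair of vertices in distinct parts has link of size `> n/10`, and
(ii) for distinct parts `i, j, ℓ`, any `Aᵢ ⊆ Uᵢ`, `Aⱼ ⊆ Uⱼ` with
`|Aᵢ|, |Aⱼ| > n/10` and any `v ∈ U_ℓ`, the number of edges of `H` containing
`v` and meeting both `Aᵢ` and `Aⱼ` is at least `|Aᵢ||Aⱼ|/10`,
then any other 3-partition (surjective `g : V → Fin 3` with every edge having
exactly one vertex in each `g`-part) equals the partition given by `f` as an
unordered partition. -/
theorem tripartition_unique {V : Type*} [Fintype V] [DecidableEq V]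
    (H : Finset (Finset V)) (hcard : ∀ e ∈ H, e.card = 3)
    (n : ℕ) (hn : n = Fintype.card V)
    (f : V → Fin 3) (hfsurj : Function.Surjective f)
    (hf : ∀ e ∈ H, ∀ i : Fin 3, (e.filter (fun v => f v = i)).card = 1)
    (hlink : ∀ u v : V, f u ≠ f v →
      ∀ ℓ : Fin 3, ℓ ≠ f u → ℓ ≠ f v →
        ((Finset.univ.filter (fun w : V =>
            f w = ℓ ∧ ({u, v, w} : Finset V) ∈ H)).card : ℝ) > n / 10)
    (hpair : ∀ i j ℓ : Fin 3, i ≠ j → j ≠ ℓ → i ≠ ℓ →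
      ∀ Ai Aj : Finset V, (∀ a ∈ Ai, f a = i) → (∀ a ∈ Aj, f a = j) →
        (Ai.card : ℝ) > n / 10 → (Aj.card : ℝ) > n / 10 →
        ∀ v : V, f v = ℓ →
          ((H.filter (fun e => v ∈ e ∧ (∃ a ∈ Ai, a ∈ e) ∧
              (∃ a ∈ Aj, a ∈ e))).card : ℝ) ≥ (Ai.card : ℝ) * Aj.card / 10)
    (g : V → Fin 3) (hgsurj : Function.Surjective g)
    (hg : ∀ e ∈ H, ∀ i : Fin 3, (e.filter (fun v => g v = i)).card = 1) :
    ∃ σ : Equiv.Perm (Fin 3), ∀ v : V, g v = σ (f v) :=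
  tripartition_unique_general H n f hfsurj hlink g hg
end

section
/- Let t ≥ 33 be an integer and let ν, ν' be positive reals with ν' = ν^{1/4} and ν sufficiently small. Suppose J is a finite multiset of triples indexed so that each element has degree exactly l^{C(t,2)-3} in the bipartite incidence graph with the set Φ of functions φ: E(K_t) → [l], where the triple {i,j,k}_{abc} is incident to φ iff φ({i,j}) = a, φ({j,k}) = b, φ({i,k}) = c. Assume every φ ∈ Φ satisfies |J_φ| ≤ t³/27, where J_φ is the set of elements of J incident to φ. If |J| > (1-ν)·l³t³/27, then for at least (1-ν')·l^{C(t,2)} of the functions φ ∈ Φ, we have |J_φ| ≥ (1-ν')·|J|/l³. -/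
/-!
Every triple of `J` is compatible with exactly a `1/l³` fraction of the colourings `φ`, so
the average of `|J_φ|` over `Φ` is `μ = |J|/l³ > (1-ν) t³/27`. Since no `|J_φ|` exceeds
`t³/27 < μ/(1-ν)`, a reverse Markov inequality bounds the proportion of colourings with
`|J_φ| < (1-ν')μ`, and the condition `(1 - ν'(1-ν'))(1-ν) ≥ 1-ν'` makes that bound at most `ν'`.
-/

open Finset

theorem card_filter_eqOn_mul_pow {α β : Type*} [Fintype α] [DecidableEq α] [Fintype β]
    [DecidableEq β] (s : Finset α) (g : α → β) :
    #{φ : α → β | ∀ a ∈ s, φ a = g a} * Fintype.card β ^ #s =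
      Fintype.card β ^ Fintype.card α := by
  have hpi : ({φ : α → β | ∀ a ∈ s, φ a = g a} : Finset (α → β)) =
      Fintype.piFinset fun a => if a ∈ s then {g a} else univ := by
    ext φ
    simp only [mem_filter, mem_univ, true_and, Fintype.mem_piFinset]
    refine forall_congr' fun a => ?_
    split_ifs with ha <;> simp [ha]
  rw [hpi, Fintype.card_piFinset]
  simp only [apply_ite card, card_singleton, card_univ]
  rw [prod_ite, prod_const_one, one_mul, prod_const, ← pow_add, filter_not, ← compl_eq_univ_sdiff,
    filter_mem_eq_inter, univ_inter, card_compl_add_card]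

theorem card_filter_eq_three_mul_pow {α β : Type*} [Fintype α] [DecidableEq α] [Fintype β]
    [DecidableEq β] {e₁ e₂ e₃ : α} (h₁₂ : e₁ ≠ e₂) (h₁₃ : e₁ ≠ e₃) (h₂₃ : e₂ ≠ e₃) (a b c : β) :
    #{φ : α → β | φ e₁ = a ∧ φ e₂ = b ∧ φ e₃ = c} * Fintype.card β ^ 3 =
      Fintype.card β ^ Fintype.card α := by
  have hcard : #{e₁, e₂, e₃} = 3 := card_eq_three.2 ⟨e₁, e₂, e₃, h₁₂, h₁₃, h₂₃, rfl⟩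
  rw [← hcard, ← card_filter_eqOn_mul_pow _
    (fun e => if e = e₁ then a else if e = e₂ then b else c)]
  congr 3
  ext φ
  simp [h₁₂.symm, h₁₃.symm, h₂₃.symm]

theorem sum_sub_card_mul_le_card_filter_mul {ι : Type*} (s : Finset ι) (f : ι → ℝ) {T c : ℝ}
    (hf : ∀ i ∈ s, f i ≤ T) :
    ∑ i ∈ s, f i - #s * c ≤ #{i ∈ s | c ≤ f i} * (T - c) := by
  classical
  have hgood : ∑ i ∈ s with c ≤ f i, f i ≤ #{i ∈ s | c ≤ f i} * T := by
    simpa using sum_le_card_nsmul _ _ T fun i hi => hf i (mem_filter.1 hi).1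
  have hbad : ∑ i ∈ s with ¬c ≤ f i, f i ≤ #{i ∈ s | ¬c ≤ f i} * c := by
    simpa using sum_le_card_nsmul _ _ c fun i hi => (not_le.1 (mem_filter.1 hi).2).le
  have hcard : (#{i ∈ s | c ≤ f i} : ℝ) + #{i ∈ s | ¬c ≤ f i} = #s := by
    exact_mod_cast card_filter_add_card_filter_not _
  rw [← sum_filter_add_sum_filter_not s (c ≤ f ·)]
  linear_combination hgood + hbad + c * hcard

theorem one_sub_mul_card_le_card_filter {ι : Type*} (s : Finset ι) (f : ι → ℝ) {T μ ν ν' : ℝ}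
    (hf : ∀ i ∈ s, f i ≤ T) (hsum : ∑ i ∈ s, f i = #s * μ) (hμ : 0 < μ)
    (hT : (1 - ν) * T ≤ μ) (hν0 : 0 ≤ ν) (hν1 : ν ≤ 1) (hν'0 : 0 < ν') (hν'1 : ν' ≤ 1)
    (hsmall : (1 - ν' * (1 - ν')) * (1 - ν) ≥ 1 - ν') :
    (1 - ν') * #s ≤ #{i ∈ s | (1 - ν') * μ ≤ f i} := by
  set M : ℝ := ((#{i ∈ s | (1 - ν') * μ ≤ f i} : ℕ) : ℝ)
  have hM : 0 ≤ M := Nat.cast_nonneg _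
  have hmarkov : #s * μ * ν' ≤ M * (T - (1 - ν') * μ) := by
    linear_combination (sum_sub_card_mul_le_card_filter_mul s f hf (c := (1 - ν') * μ)) - hsum
  have hq : 0 < 1 - (1 - ν) * (1 - ν') := by nlinarith
  have hscaled : (1 - ν) * ν' * #s * μ ≤ M * (1 - (1 - ν) * (1 - ν')) * μ := by
    nlinarith [mul_le_mul_of_nonneg_left hT hM,
      mul_le_mul_of_nonneg_left hmarkov (sub_nonneg.2 hν1)]
  have hratio : (1 - ν) * ν' * #s ≤ M * (1 - (1 - ν) * (1 - ν')) := le_of_mul_le_mul_right hscaled hμ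
  refine le_of_mul_le_mul_right ?_ hq
  nlinarith [mul_le_mul_of_nonneg_right hsmall (Nat.cast_nonneg (α := ℝ) #s)]

section Edges

variable {t : ℕ}

def edge {i j : Fin t} (h : i ≠ j) : {e : Finset (Fin t) // e.card = 2} :=
  ⟨{i, j}, card_pair h⟩

theorem eq_edge_of_mem {e : {e : Finset (Fin t) // e.card = 2}} {i j : Fin t} (h : i ≠ j)
    (hi : i ∈ e.1) (hj : j ∈ e.1) : e = edge h :=
  Subtype.ext (eq_of_subset_of_card_le (insert_subset hi (singleton_subset_iff.2 hj))
    (by rw [e.2, card_pair h])).symm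

theorem edge_ne_edge {i j k l m : Fin t} (hij : i ≠ j) (hkl : k ≠ l)
    (hm : m ∈ ({i, j} : Finset _)) (hmk : m ≠ k) (hml : m ≠ l) : edge hij ≠ edge hkl := by
  intro h
  have : m ∈ (edge hkl).1 := h ▸ hm
  simp_all [edge]

end Edges

def IsCompatible {t l : ℕ} (x : (Fin t × Fin t × Fin t) × (Fin l × Fin l × Fin l))
    (φ : {e : Finset (Fin t) // e.card = 2} → Fin l) : Prop :=
  ∀ e : {e : Finset (Fin t) // e.card = 2},
    (x.1.1 ∈ e.1 ∧ x.1.2.1 ∈ e.1 → φ e = x.2.1) ∧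
    (x.1.2.1 ∈ e.1 ∧ x.1.2.2 ∈ e.1 → φ e = x.2.2.1) ∧
    (x.1.1 ∈ e.1 ∧ x.1.2.2 ∈ e.1 → φ e = x.2.2.2)

section Compatible

variable {t l : ℕ}

instance (x : (Fin t × Fin t × Fin t) × (Fin l × Fin l × Fin l))
    (φ : {e : Finset (Fin t) // e.card = 2} → Fin l) : Decidable (IsCompatible x φ) := by
  unfold IsCompatible; infer_instance

theorem isCompatible_iff {i j k : Fin t} (hij : i < j) (hjk : j < k) (a b c : Fin l)
    (φ : {e : Finset (Fin t) // e.card = 2} → Fin l) :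
    IsCompatible ((i, j, k), (a, b, c)) φ ↔
      φ (edge hij.ne) = a ∧ φ (edge hjk.ne) = b ∧ φ (edge (hij.trans hjk).ne) = c := by
  constructor
  · intro h
    exact ⟨(h _).1 ⟨mem_insert_self _ _, by simp [edge]⟩,
      (h _).2.1 ⟨mem_insert_self _ _, by simp [edge]⟩,
      (h _).2.2 ⟨mem_insert_self _ _, by simp [edge]⟩⟩
  · rintro ⟨ha, hb, hc⟩ e
    refine ⟨fun ⟨hi, hj⟩ => ?_, fun ⟨hj, hk⟩ => ?_, fun ⟨hi, hk⟩ => ?_⟩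
    · rwa [eq_edge_of_mem hij.ne hi hj]
    · rwa [eq_edge_of_mem hjk.ne hj hk]
    · rwa [eq_edge_of_mem (hij.trans hjk).ne hi hk]

theorem card_isCompatible_mul_pow (x : (Fin t × Fin t × Fin t) × (Fin l × Fin l × Fin l))
    (hx : x.1.1 < x.1.2.1 ∧ x.1.2.1 < x.1.2.2) :
    #{φ | IsCompatible x φ} * l ^ 3 = l ^ t.choose 2 := by
  obtain ⟨⟨i, j, k⟩, ⟨a, b, c⟩⟩ := x
  obtain ⟨hij, hjk⟩ : i < j ∧ j < k := hx
  have hik := hij.trans hjk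
  simp_rw [isCompatible_iff hij hjk]
  have h := card_filter_eq_three_mul_pow (edge_ne_edge hij.ne hjk.ne (by simp) hij.ne hik.ne)
    (edge_ne_edge hij.ne hik.ne (by simp) hij.ne.symm hjk.ne)
    (edge_ne_edge hjk.ne hik.ne (by simp) hij.ne.symm hjk.ne) a b c
  rwa [Fintype.card_fin, Fintype.card_finset_len, Fintype.card_fin] at h

theorem sum_card_isCompatible_mul_pow
    (J : Finset ((Fin t × Fin t × Fin t) × (Fin l × Fin l × Fin l)))
    (hJ : ∀ x ∈ J, x.1.1 < x.1.2.1 ∧ x.1.2.1 < x.1.2.2) :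
    (∑ φ, #{x ∈ J | IsCompatible x φ}) * l ^ 3 = #J * l ^ t.choose 2 := by
  have := sum_card_bipartiteAbove_eq_sum_card_bipartiteBelow (s := univ) (t := J)
    (r := fun φ x => IsCompatible x φ)
  simp only [bipartiteAbove, bipartiteBelow] at this
  rw [this, sum_mul, sum_congr rfl fun x hx => card_isCompatible_mul_pow x (hJ x hx), sum_const,
    smul_eq_mul]

end Compatible

theorem averaging_lemma_general (t l : ℕ)
    (ν ν' : ℝ) (hν0 : 0 < ν) (hν1 : ν < 1) (hν' : ν' = ν ^ ((1 : ℝ) / 4))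
    (hsmall : (1 - ν' * (1 - ν')) * (1 - ν) ≥ 1 - ν')
    (J : Finset ((Fin t × Fin t × Fin t) × (Fin l × Fin l × Fin l)))
    (hJ : ∀ x ∈ J, x.1.1 < x.1.2.1 ∧ x.1.2.1 < x.1.2.2)
    (Jφ : ({e : Finset (Fin t) // e.card = 2} → Fin l) →
      Set ((Fin t × Fin t × Fin t) × (Fin l × Fin l × Fin l)))
    (hJφ : ∀ φ, Jφ φ = {x | x ∈ J ∧ ∀ e : {e : Finset (Fin t) // e.card = 2},
      (x.1.1 ∈ e.1 ∧ x.1.2.1 ∈ e.1 → φ e = x.2.1) ∧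
      (x.1.2.1 ∈ e.1 ∧ x.1.2.2 ∈ e.1 → φ e = x.2.2.1) ∧
      (x.1.1 ∈ e.1 ∧ x.1.2.2 ∈ e.1 → φ e = x.2.2.2)})
    (hbound : ∀ φ, (Nat.card (Jφ φ) : ℝ) ≤ (t : ℝ) ^ 3 / 27)
    (hbig : (J.card : ℝ) > (1 - ν) * l ^ 3 * t ^ 3 / 27) :
    (Nat.card {φ : {e : Finset (Fin t) // e.card = 2} → Fin l |
        (Nat.card (Jφ φ) : ℝ) ≥ (1 - ν') * J.card / l ^ 3} : ℝ) ≥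
      (1 - ν') * l ^ (t.choose 2) := by
  have hcard : ∀ φ, Nat.card (Jφ φ) = #{x ∈ J | IsCompatible x φ} := fun φ => by
    rw [hJφ, ← Set.ncard_coe_finset, coe_filter, Nat.card_coe_set_eq]
    rfl
  simp only [hcard] at hbound ⊢
  rw [Nat.card_coe_set_eq, Set.ncard_eq_toFinset_card', Set.toFinset_ofPred]
  have hJpos : (0 : ℝ) < #J := lt_of_le_of_lt (div_nonneg
    (mul_nonneg (mul_nonneg (by linarith) (by positivity)) (by positivity)) (by norm_num)) hbig
  have hl : 0 < l := by
    obtain ⟨x, -⟩ := card_pos.1 (by exact_mod_cast hJpos)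
    exact Fin.pos x.2.1
  have hN : (#(univ : Finset ({e : Finset (Fin t) // e.card = 2} → Fin l)) : ℝ) =
      l ^ t.choose 2 := by
    rw [card_univ, Fintype.card_fun, Fintype.card_fin, Fintype.card_finset_len, Fintype.card_fin]
    push_cast; rfl
  have hsum : ∑ φ, (#{x ∈ J | IsCompatible x φ} : ℝ) =
      #(univ : Finset ({e : Finset (Fin t) // e.card = 2} → Fin l)) * (#J / l ^ 3) := by
    rw [hN, mul_div_assoc', eq_div_iff (by positivity)]
    exact_mod_cast (sum_card_isCompatible_mul_pow J hJ).trans (mul_comm _ _)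
  have hT : (1 - ν) * ((t : ℝ) ^ 3 / 27) ≤ #J / l ^ 3 := by
    rw [le_div_iff₀ (by positivity)]
    linarith
  have hν'0 : 0 < ν' := hν' ▸ Real.rpow_pos_of_pos hν0 _
  have hν'1 : ν' ≤ 1 := hν' ▸ Real.rpow_le_one hν0.le hν1.le (by norm_num)
  have := one_sub_mul_card_le_card_filter univ _ (fun φ _ => hbound φ) hsum
    (div_pos hJpos (by positivity)) hT hν0.le hν1.le hν'0 hν'1 hsmall
  simpa only [hN, mul_div_assoc] using this

/-- The averaging lemma (Lemma `markov` of the paper): with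
`Φ = {φ : pairs of [t] → [l]}`, a multiset `J` of decorated triples
`{i,j,k}_{abc}` (`i<j<k`), each incident to exactly `l^{C(t,2)-3}` functions,
where `J_φ` denotes the set of elements of `J` compatible with `φ`: if every
`φ` satisfies `|J_φ| ≤ t³/27` and `|J| > (1-ν) l³ t³ / 27`, then for at least
`(1-ν') l^{C(t,2)}` of the functions `φ` we have `|J_φ| ≥ (1-ν')|J|/l³`. -/
theorem averaging_lemma (t l : ℕ) (ht : 33 ≤ t)
    (ν ν' : ℝ) (hν0 : 0 < ν) (hν1 : ν < 1) (hν' : ν' = ν ^ ((1 : ℝ) / 4))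
    (hsmall : (1 - ν' * (1 - ν')) * (1 - ν) ≥ 1 - ν')
    (J : Finset ((Fin t × Fin t × Fin t) × (Fin l × Fin l × Fin l)))
    (hJ : ∀ x ∈ J, x.1.1 < x.1.2.1 ∧ x.1.2.1 < x.1.2.2)
    (Jφ : ({e : Finset (Fin t) // e.card = 2} → Fin l) →
      Set ((Fin t × Fin t × Fin t) × (Fin l × Fin l × Fin l)))
    (hJφ : ∀ φ, Jφ φ = {x | x ∈ J ∧ ∀ e : {e : Finset (Fin t) // e.card = 2},
      (x.1.1 ∈ e.1 ∧ x.1.2.1 ∈ e.1 → φ e = x.2.1) ∧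
      (x.1.2.1 ∈ e.1 ∧ x.1.2.2 ∈ e.1 → φ e = x.2.2.1) ∧
      (x.1.1 ∈ e.1 ∧ x.1.2.2 ∈ e.1 → φ e = x.2.2.2)})
    (hbound : ∀ φ, (Nat.card (Jφ φ) : ℝ) ≤ (t : ℝ) ^ 3 / 27)
    (hbig : (J.card : ℝ) > (1 - ν) * l ^ 3 * t ^ 3 / 27) :
    (Nat.card {φ : {e : Finset (Fin t) // e.card = 2} → Fin l |
        (Nat.card (Jφ φ) : ℝ) ≥ (1 - ν') * J.card / l ^ 3} : ℝ) ≥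
      (1 - ν') * l ^ (t.choose 2) :=
  averaging_lemma_general t l ν ν' hν0 hν1 hν' hsmall J hJ Jφ hJφ hbound hbig
end
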